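/- Let M(Σ,Ω) = (1 - uΣ)²/Ω_V with u = λ/√6 and Ω_V = 1 - Σ² - Ω > 0. Then along solutions of the system, M' = -[(6(Σ-u)² + (3γ-λ²)Ω)/(1-uΣ)]·M. In particular, if 3γ > λ² and λ² < 6, then M is strictly decreasing along any interior orbit (Ω_V > 0, Ω > 0) except at the fixed point P = (u, 0). -/

import Mathlib

/-! Writing `u = λ/√6`, one has `√(3/2)·λ = 3u`, so `Σ' = -(2-q)Σ + 3uΩ_V`. The quotient rule
applied to `M = (1-uΣ)²/Ω_V` with `Ω_V' = -2ΣΣ' - Ω'` gives, after clearing denominators, the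
stated closed form of `M'`, in which `λ² = 6u²`. When `λ² < 6` we have `u² < 1` and `Σ² < 1`,
so `1 - uΣ > 0`; if moreover `3γ > λ²` and `Ω > 0`, the bracket is positive and `M' < 0`. -/

open Real

lemma sqrt_three_halves_mul (lam : ℝ) : √(3 / 2) * lam = 3 * (lam / √6) := by
  have h6 : √6 ≠ 0 := by positivity
  rw [mul_div_assoc', eq_div_iff h6, mul_right_comm, ← sqrt_mul (by norm_num),
    show (3 / 2 * 6 : ℝ) = 3 ^ 2 by norm_num, sqrt_sq (by norm_num)]

lemma six_mul_div_sqrt_six_sq (lam : ℝ) : 6 * (lam / √6) ^ 2 = lam ^ 2 := by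
  rw [div_pow, sq_sqrt (by norm_num)]
  ring

lemma one_sub_mul_pos_of_sq_lt_one {u s : ℝ} (hu : u ^ 2 < 1) (hs : s ^ 2 < 1) :
    0 < 1 - u * s := by
  nlinarith [sq_nonneg (u - s), sq_nonneg (u + s)]

theorem hasDerivAt_lyapunov {u g : ℝ} {S O : ℝ → ℝ} {N : ℝ}
    (hS : HasDerivAt S (-(2 - (-1 + 3 * S N ^ 2 + 3 / 2 * g * O N)) * S N
        + 3 * u * (1 - S N ^ 2 - O N)) N)
    (hO : HasDerivAt O ((2 * (1 + (-1 + 3 * S N ^ 2 + 3 / 2 * g * O N)) - 3 * g) * O N) N)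
    (hv : 1 - S N ^ 2 - O N ≠ 0) :
    HasDerivAt (fun N => (1 - u * S N) ^ 2 / (1 - S N ^ 2 - O N))
      (-((6 * (S N - u) ^ 2 + (3 * g - 6 * u ^ 2) * O N) / (1 - u * S N))
        * ((1 - u * S N) ^ 2 / (1 - S N ^ 2 - O N))) N := by
  have hnum := ((hS.const_mul u).const_sub 1).pow 2
  have hden := ((hasDerivAt_const N (1 : ℝ)).sub (hS.pow 2)).sub hO
  refine (hnum.div hden hv).congr_deriv ?_
  simp only [Pi.pow_apply, Pi.sub_apply]
  field_simp
  ring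

theorem stmt_6 (lam gam : ℝ) (hl6 : lam ^ 2 < 6)
    (S O : ℝ → ℝ)
    (hS : ∀ N, HasDerivAt S (-(2 - (-1 + 3 * S N ^ 2 + 3 / 2 * gam * O N)) * S N
        + Real.sqrt (3 / 2) * lam * (1 - S N ^ 2 - O N)) N)
    (hO : ∀ N, HasDerivAt O
        ((2 * (1 + (-1 + 3 * S N ^ 2 + 3 / 2 * gam * O N)) - 3 * gam) * O N) N)
    (N : ℝ) (hint : S N ^ 2 + O N < 1) (hOp : 0 < O N) :
    HasDerivAt (fun N => (1 - lam / Real.sqrt 6 * S N) ^ 2 / (1 - S N ^ 2 - O N))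
      (-((6 * (S N - lam / Real.sqrt 6) ^ 2 + (3 * gam - lam ^ 2) * O N)
          / (1 - lam / Real.sqrt 6 * S N))
        * ((1 - lam / Real.sqrt 6 * S N) ^ 2 / (1 - S N ^ 2 - O N))) N ∧
    (lam ^ 2 < 3 * gam →
      -((6 * (S N - lam / Real.sqrt 6) ^ 2 + (3 * gam - lam ^ 2) * O N)
          / (1 - lam / Real.sqrt 6 * S N))
        * ((1 - lam / Real.sqrt 6 * S N) ^ 2 / (1 - S N ^ 2 - O N)) < 0) := by
  have hu : (lam / √6) ^ 2 < 1 := by linarith [six_mul_div_sqrt_six_sq lam]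
  have hw : 0 < 1 - lam / √6 * S N := one_sub_mul_pos_of_sq_lt_one hu (by nlinarith)
  have hv : 0 < 1 - S N ^ 2 - O N := by linarith
  refine ⟨?_, fun hgam => ?_⟩
  · have hM := hasDerivAt_lyapunov (u := lam / √6)
      (by rw [← sqrt_three_halves_mul]; exact hS N) (hO N) hv.ne'
    rwa [six_mul_div_sqrt_six_sq] at hM
  · have hbracket : 0 < 6 * (S N - lam / √6) ^ 2 + (3 * gam - lam ^ 2) * O N :=
      add_pos_of_nonneg_of_pos (by positivity) (mul_pos (by linarith) hOp)
    rw [neg_mul, neg_lt_zero]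
    positivity
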